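/- Invariance of the parabolic mean-oscillation seminorm under boundary flattening (the claim in Section 6 that the leading coefficients of the transformed operator again satisfy the VMO assumption, with a possibly different parameter): Let d ≥ 2, m ≥ 1, K > 0, T ∈ (−∞,∞], and let φ : ℝ^{d−1} → ℝ be Lipschitz continuous with constant K. Set Ω := {x = (x₁,x') : x₁ > φ(x')} and Φ(x₁,x') := (x₁ − φ(x'), x'), so that Φ(Ω) = ℝ^d_+ and Φ^{−1}(y₁,y') = (y₁ + φ(y'), y'). Then there exists a constant C = C(d,m,K) ≥ 1 such that for every bounded measurable function a : (−∞,T)×Ω → ℂ, the transformed function ã(t,y) := a(t, Φ^{−1}(y)), defined on (−∞,T)×ℝ^d_+, satisfies (ã)^♯_R ≤ C·(a)^♯_{C·R} for every R > 0, where the first mean-oscillation seminorm is taken over (−∞,T)×ℝ^d_+ and the second over (−∞,T)×Ω. -/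

import Mathlib

open MeasureTheory Filter Set
open scoped ENNReal NNReal Topology

noncomputable section

/-- The finite set of multi-indices `α : Fin d → ℕ` with `|α| ≤ n`. -/
def multiIdxLe (d n : ℕ) : Finset (Fin d → ℕ) :=
  (Fintype.piFinset fun _ : Fin d => Finset.range (n + 1)).filter fun α => (∑ i, α i) ≤ n

/-- The finite set of multi-indices `α : Fin d → ℕ` with `|α| = n`. -/
def multiIdxEq (d n : ℕ) : Finset (Fin d → ℕ) :=
  (Fintype.piFinset fun _ : Fin d => Finset.range (n + 1)).filter fun α => (∑ i, α i) = n

/-- Spatial partial derivative `∂_{x_i}` for functions of `(t, x)`. -/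
def spd {d : ℕ} (i : Fin d) (u : ℝ × (Fin d → ℝ) → ℂ) : ℝ × (Fin d → ℝ) → ℂ :=
  fun p => fderiv ℝ (fun y => u (p.1, y)) p.2 (Pi.single i 1)

/-- Iterated spatial partial derivative `∂^α` in the space variables. -/
def partialAlpha {d : ℕ} (α : Fin d → ℕ) (u : ℝ × (Fin d → ℝ) → ℂ) :
    ℝ × (Fin d → ℝ) → ℂ :=
  ((List.ofFn fun i : Fin d => (spd i)^[α i]).foldr (· ∘ ·) id) u

/-- `D^α = (-i)^{|α|} ∂^α`. -/
def DOp {d : ℕ} (α : Fin d → ℕ) (u : ℝ × (Fin d → ℝ) → ℂ) : ℝ × (Fin d → ℝ) → ℂ :=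
  fun z => (-Complex.I) ^ (∑ i, α i) * partialAlpha α u z

/-- Time derivative `∂_t u`. -/
def timeDeriv {d : ℕ} (u : ℝ × (Fin d → ℝ) → ℂ) : ℝ × (Fin d → ℝ) → ℂ :=
  fun p => deriv (fun s => u (s, p.2)) p.1

/-- Muckenhoupt `A_p` constant of a weight on `ℝ` (sup over bounded open intervals). -/
def ApConst (p : ℝ) (ω : ℝ → ℝ) : ℝ≥0∞ :=
  ⨆ (a : ℝ) (b : ℝ) (_ : a < b),
    ((∫⁻ t in Ioo a b, ENNReal.ofReal (ω t)) / ENNReal.ofReal (b - a)) *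
      ((∫⁻ t in Ioo a b, ENNReal.ofReal (ω t ^ (-1 / (p - 1)))) /
          ENNReal.ofReal (b - a)) ^ (p - 1)

/-- A weight on `ℝ`: measurable, positive, locally integrable. -/
def IsWeight (ω : ℝ → ℝ) : Prop :=
  Measurable ω ∧ (∀ t, 0 < ω t) ∧ LocallyIntegrable ω volume

/-- The time interval `(-∞, T)` for `T ∈ (-∞, ∞]`. -/
def timeDom (T : EReal) : Set ℝ := {t : ℝ | (t : EReal) < T}

/-- Weighted mixed norm `‖f‖_{L_{p,q,ω}((−∞,T)×G)}`. -/
def LpqNorm {d : ℕ} (p q : ℝ) (T : EReal) (ω : ℝ → ℝ) (G : Set (Fin d → ℝ))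
    (f : ℝ × (Fin d → ℝ) → ℂ) : ℝ≥0∞ :=
  (∫⁻ t in timeDom T,
      (∫⁻ x in G, (‖f (t, x)‖₊ : ℝ≥0∞) ^ q) ^ (p / q) * ENNReal.ofReal (ω t)) ^ (1 / p)

/-- Open Euclidean ball in `ℝ^d`. -/
def euclBall {d : ℕ} (x : Fin d → ℝ) (r : ℝ) : Set (Fin d → ℝ) :=
  {y | ∑ i, (y i - x i) ^ 2 < r ^ 2}

/-- Parabolic cylinder `Q_r(t,x) = (t - r^{2m}, t) × B_r(x)`. -/
def parCyl {d : ℕ} (m : ℕ) (r t : ℝ) (x : Fin d → ℝ) : Set (ℝ × (Fin d → ℝ)) :=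
  Ioo (t - r ^ (2 * m)) t ×ˢ euclBall x r

/-- Mean oscillation `osc(f, Q) = ⨍_Q |f - (f)_Q|`, valued in `ℝ≥0∞`. -/
def osc {d : ℕ} (Q : Set (ℝ × (Fin d → ℝ))) (f : ℝ × (Fin d → ℝ) → ℂ) : ℝ≥0∞ :=
  (∫⁻ z in Q, (‖f z - ⨍ w in Q, f w‖₊ : ℝ≥0∞)) / volume Q

/-- Parabolic mean-oscillation seminorm `(a)^♯_R` over `(−∞,T)×G`. -/
def sharpSemi {d : ℕ} (m : ℕ) (T : EReal) (G : Set (Fin d → ℝ))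
    (a : ℝ × (Fin d → ℝ) → ℂ) (R : ℝ) : ℝ≥0∞ :=
  ⨆ (t : ℝ) (_ : (t : EReal) < T) (x : Fin d → ℝ) (_ : x ∈ G) (r : ℝ) (_ : 0 < r)
    (_ : r ≤ R), osc (parCyl m r t x ∩ (univ ×ˢ G)) a

/-- The open sector `Σ_θ`, as a predicate. -/
def inSector (θ : ℝ) (z : ℂ) : Prop := z ≠ 0 ∧ |Complex.arg z| < θ

/-- Parameter-ellipticity condition `(E)_θ` for frozen leading coefficients. -/
def Econd (d m : ℕ) (θ : ℝ) (aL : (Fin d → ℕ) → ℂ) : Prop :=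
  ∀ ξ : Fin d → ℝ, (∑ k, ξ k ^ 2) = 1 →
    inSector θ (∑ α ∈ multiIdxEq d (2 * m), aL α * ∏ k, (ξ k : ℂ) ^ α k)

/-- The polynomial `z ↦ (ζ + z ν)^α`. -/
def symbPoly {d : ℕ} (ζ ν : Fin d → ℝ) (α : Fin d → ℕ) : Polynomial ℂ :=
  ∏ k, (Polynomial.C (ζ k : ℂ) + Polynomial.C (ν k : ℂ) * Polynomial.X) ^ α k

/-- The operator `-i d/dy`. -/
def derivOpC : (ℝ → ℂ) → ℝ → ℂ := fun v y => -Complex.I * deriv v y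

/-- Substitute `z = -i d/dy` into a polynomial and apply it to `v`. -/
def applyPoly (P : Polynomial ℂ) (v : ℝ → ℂ) : ℝ → ℂ :=
  fun y => ∑ n ∈ Finset.range (P.natDegree + 1), P.coeff n * derivOpC^[n] v y

/-- `v` solves the (LS) ODE system with data `(ζ, λ, h)`. -/
def SolvesODE (d m : ℕ) (aL : (Fin d → ℕ) → ℂ) (mOrd : Fin m → ℕ)
    (bL : Fin m → (Fin d → ℕ) → ℂ) (ν ζ : Fin d → ℝ) (lam : ℂ) (h : Fin m → ℂ)
    (v : ℝ → ℂ) : Prop :=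
  ContDiff ℝ (⊤ : ℕ∞) v ∧ Tendsto v atTop (nhds 0) ∧
    (∀ y : ℝ, 0 < y →
      lam * v y + ∑ α ∈ multiIdxEq d (2 * m), aL α * applyPoly (symbPoly ζ ν α) v y = 0) ∧
    (∀ j : Fin m, ∑ β ∈ multiIdxEq d (mOrd j), bL j β * applyPoly (symbPoly ζ ν β) v 0 = h j)

/-- Lopatinskii–Shapiro condition `(LS)_θ` with inward normal `ν`. -/
def LScond (d m : ℕ) (θ : ℝ) (aL : (Fin d → ℕ) → ℂ) (mOrd : Fin m → ℕ)
    (bL : Fin m → (Fin d → ℕ) → ℂ) (ν : Fin d → ℝ) : Prop :=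
  ∀ (ζ : Fin d → ℝ) (lam : ℂ), (∑ k, ζ k * ν k) = 0 →
    (lam = 0 ∨ |Complex.arg lam| ≤ Real.pi - θ) → ¬(ζ = 0 ∧ lam = 0) →
    ∀ h : Fin m → ℂ, ∃ v : ℝ → ℂ, SolvesODE d m aL mOrd bL ν ζ lam h v ∧
      ∀ w : ℝ → ℂ, SolvesODE d m aL mOrd bL ν ζ lam h w → ∀ y : ℝ, 0 ≤ y → w y = v y

/-- The half space `ℝ^{d+1}_+` (in space only): `x₁ > 0`. -/
def halfSpace (d : ℕ) : Set (Fin (d + 1) → ℝ) := {x | 0 < x 0}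

/-- The unit vector `e₁`. -/
def e1 (d : ℕ) : Fin (d + 1) → ℝ := fun i => if i = 0 then 1 else 0

/-- Regularity class `C^{hol, k}` (with norm ≤ K) for boundary coefficients on `(−∞,T)×G`. -/
def BCoefReg {d : ℕ} (k : ℕ) (K hol : ℝ) (T : EReal) (b : ℝ × (Fin d → ℝ) → ℂ) : Prop :=
  (∀ t : ℝ, (t : EReal) < T → ContDiff ℝ (k : ℕ∞) fun x => b (t, x)) ∧
  (∀ γ : Fin d → ℕ, (∑ i, γ i) ≤ k →
    ContinuousOn (partialAlpha γ b) {z : ℝ × (Fin d → ℝ) | (z.1 : EReal) < T} ∧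
      ∀ z : ℝ × (Fin d → ℝ), (z.1 : EReal) < T → ‖partialAlpha γ b z‖ ≤ K) ∧
  (∀ s t : ℝ, (s : EReal) < T → (t : EReal) < T → ∀ x : Fin d → ℝ,
    ‖b (t, x) - b (s, x)‖ ≤ K * |t - s| ^ hol)

/-- Admissible classical solution on `(−∞,T)×G`: restriction of a smooth function on an
open neighborhood of the closure, with finite mixed norms of `u`, `∂_t u`, `D^α u`. -/
def Admissible {d : ℕ} (p q : ℝ) (T : EReal) (ω : ℝ → ℝ) (G : Set (Fin d → ℝ)) (nmax : ℕ)
    (u : ℝ × (Fin d → ℝ) → ℂ) : Prop :=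
  (∃ O : Set (ℝ × (Fin d → ℝ)), IsOpen O ∧ closure (timeDom T ×ˢ G) ⊆ O ∧
      ContDiffOn ℝ (⊤ : ℕ∞) u O) ∧
  LpqNorm p q T ω G u < ⊤ ∧ LpqNorm p q T ω G (timeDeriv u) < ⊤ ∧
    ∀ α ∈ multiIdxLe d nmax, LpqNorm p q T ω G (DOp α u) < ⊤

/-- `λ^{1-|α|/(2m)}` (real power, with `0^0 = 1`). -/
def lamPow {d : ℕ} (m : ℕ) (lam : ℝ) (α : Fin d → ℕ) : ℝ :=
  lam ^ ((1 : ℝ) - ((∑ i, α i : ℕ) : ℝ) / (2 * (m : ℝ)))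


/-- The tail coordinates `x' ∈ ℝ^d` of a point `x = (x₁, x') ∈ ℝ^{d+1}`. -/
def tailCoord {d : ℕ} (x : Fin (d + 1) → ℝ) : Fin d → ℝ := fun i => x i.succ

/-- The graph domain `Ω = {x₁ > φ(x')}`. -/
def graphDomain {d : ℕ} (φ : (Fin d → ℝ) → ℝ) : Set (Fin (d + 1) → ℝ) :=
  {x | φ (tailCoord x) < x 0}

/-- The boundary `∂Ω = {x₁ = φ(x')}` of the graph domain. -/
def graphBoundary {d : ℕ} (φ : (Fin d → ℝ) → ℝ) : Set (Fin (d + 1) → ℝ) :=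
  {x | x 0 = φ (tailCoord x)}

/-- Partial derivative `∂_i` of a real-valued function on `ℝ^d`. -/
def pdR {d : ℕ} (i : Fin d) (f : (Fin d → ℝ) → ℝ) : (Fin d → ℝ) → ℝ :=
  fun x => fderiv ℝ f x (Pi.single i 1)

/-- Iterated partial derivative `∂^γ` of a real-valued function on `ℝ^d`. -/
def partialAlphaR {d : ℕ} (γ : Fin d → ℕ) (f : (Fin d → ℝ) → ℝ) : (Fin d → ℝ) → ℝ :=
  ((List.ofFn fun i : Fin d => (pdR i)^[γ i]).foldr (· ∘ ·) id) f

/-- Euclidean distance on `ℝ^d` (as pi type). -/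
def euclDist {d : ℕ} (x y : Fin d → ℝ) : ℝ := Real.sqrt (∑ i, (x i - y i) ^ 2)

/-- `C^{2m-1,1}` regularity of the graph function `φ`, with norm bounded by `K`. -/
def GraphReg {d : ℕ} (m : ℕ) (K : ℝ) (φ : (Fin d → ℝ) → ℝ) : Prop :=
  ContDiff ℝ ((2 * m - 1 : ℕ) : ℕ∞) φ ∧
  (∀ γ : Fin d → ℕ, 1 ≤ (∑ i, γ i) → (∑ i, γ i) ≤ 2 * m - 1 →
    ∀ x, |partialAlphaR γ φ x| ≤ K) ∧
  (∀ γ : Fin d → ℕ, (∑ i, γ i) = 2 * m - 1 →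
    ∀ x y, |partialAlphaR γ φ x - partialAlphaR γ φ y| ≤ K * euclDist x y)

/-- The inward unit normal `ν(x̂) = (1, −∇φ(x̂'))/√(1+|∇φ(x̂')|²)` of the graph domain. -/
def inwardNormal {d : ℕ} (φ : (Fin d → ℝ) → ℝ) (x' : Fin d → ℝ) : Fin (d + 1) → ℝ :=
  fun i =>
    (Fin.cons 1 (fun j : Fin d => -(fderiv ℝ φ x' (Pi.single j 1))) : Fin (d + 1) → ℝ) i /
      Real.sqrt (1 + ∑ j, fderiv ℝ φ x' (Pi.single j 1) ^ 2)

/-- The inverse boundary-flattening map `Ψ(y₁, y') = (y₁ + φ(y'), y')`. -/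
def unflattenMap {d : ℕ} (φ : (Fin d → ℝ) → ℝ) (y : Fin (d + 1) → ℝ) : Fin (d + 1) → ℝ :=
  Function.update y 0 (y 0 + φ (tailCoord y))


namespace SharpFlatten

open MeasureTheory
open scoped Pointwise

/-! ### Euclidean distance facts -/

lemma euclDist_eq_dist {d : ℕ} (x y : Fin d → ℝ) :
    euclDist x y = dist ((WithLp.equiv 2 (Fin d → ℝ)).symm x)
      ((WithLp.equiv 2 (Fin d → ℝ)).symm y) := by
  rw [EuclideanSpace.dist_eq]
  simp only [euclDist, WithLp.equiv_symm_apply, PiLp.toLp_apply, Real.dist_eq, sq_abs]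

lemma euclDist_triangle {d : ℕ} (x y z : Fin d → ℝ) :
    euclDist x z ≤ euclDist x y + euclDist y z := by
  rw [euclDist_eq_dist, euclDist_eq_dist, euclDist_eq_dist]
  exact dist_triangle _ _ _

lemma euclDist_nonneg {d : ℕ} (x y : Fin d → ℝ) : 0 ≤ euclDist x y := Real.sqrt_nonneg _

lemma mem_euclBall_iff {d : ℕ} {x y : Fin d → ℝ} {r : ℝ} (hr : 0 < r) :
    y ∈ euclBall x r ↔ euclDist y x < r := by
  simp only [euclBall, Set.mem_setOf_eq, euclDist]
  rw [Real.sqrt_lt' hr]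

lemma isOpen_euclBall {d : ℕ} (x : Fin d → ℝ) (r : ℝ) : IsOpen (euclBall x r) := by
  have : euclBall x r = (fun y : Fin d → ℝ => ∑ i, (y i - x i) ^ 2) ⁻¹' Set.Iio (r ^ 2) := rfl
  rw [this]
  exact IsOpen.preimage (by continuity) isOpen_Iio

lemma euclBall_image {d : ℕ} (x : Fin d → ℝ) {r : ℝ} (hr : 0 < r) :
    euclBall x r = (fun z : Fin d → ℝ => x + r • z) '' euclBall (0 : Fin d → ℝ) 1 := by
  have h0 : ∀ i : Fin d, (0 : Fin d → ℝ) i = 0 := fun _ => rfl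
  ext y
  constructor
  · intro h
    have h' : ∑ i, (y i - x i) ^ 2 < r ^ 2 := h
    refine ⟨fun i => (y i - x i) / r, ?_, ?_⟩
    · show ∑ i, ((y i - x i) / r - (0 : Fin d → ℝ) i) ^ 2 < 1 ^ 2
      have e1 : ∑ i, ((y i - x i) / r - (0 : Fin d → ℝ) i) ^ 2
          = (∑ i, (y i - x i) ^ 2) / r ^ 2 := by
        rw [Finset.sum_div]
        refine Finset.sum_congr rfl fun i _ => ?_
        rw [h0, sub_zero, div_pow]
      rw [e1, one_pow, div_lt_one (by positivity)]
      exact h'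
    · funext i
      show x i + r * ((y i - x i) / r) = y i
      field_simp
      ring
  · rintro ⟨z, hz, rfl⟩
    have hz' : ∑ i, (z i - (0 : Fin d → ℝ) i) ^ 2 < 1 ^ 2 := hz
    show ∑ i, ((x + r • z) i - x i) ^ 2 < r ^ 2
    have e1 : ∑ i, ((x + r • z) i - x i) ^ 2
        = r ^ 2 * ∑ i, (z i - (0 : Fin d → ℝ) i) ^ 2 := by
      rw [Finset.mul_sum]
      refine Finset.sum_congr rfl fun i _ => ?_
      show (x i + r * z i - x i) ^ 2 = r ^ 2 * (z i - (0 : Fin d → ℝ) i) ^ 2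
      rw [h0, sub_zero]; ring
    calc ∑ i, ((x + r • z) i - x i) ^ 2
        = r ^ 2 * ∑ i, (z i - (0 : Fin d → ℝ) i) ^ 2 := e1
    _ < r ^ 2 * 1 := by
        apply mul_lt_mul_of_pos_left _ (by positivity)
        rw [one_pow] at hz'
        exact hz'
    _ = r ^ 2 := mul_one _

lemma volume_euclBall {d : ℕ} (x : Fin d → ℝ) {r : ℝ} (hr : 0 < r) :
    volume (euclBall x r)
      = ENNReal.ofReal (r ^ d) * volume (euclBall (0 : Fin d → ℝ) 1) := by
  rw [euclBall_image x hr]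
  have h1 : (fun z : Fin d → ℝ => x + r • z) '' euclBall (0 : Fin d → ℝ) 1
      = (fun w : Fin d → ℝ => x + w) '' (r • euclBall (0 : Fin d → ℝ) 1) := by
    rw [← Set.image_smul, ← Set.image_comp]
    rfl
  rw [h1, Set.image_add_left, measure_preimage_add, Measure.addHaar_smul]
  have h2 : Module.finrank ℝ (Fin d → ℝ) = d := by simp [Module.finrank_pi]
  rw [h2, abs_of_nonneg (pow_nonneg hr.le d)]

lemma volume_euclBall_one_pos (d : ℕ) : 0 < volume (euclBall (0 : Fin d → ℝ) 1) := by
  refine (isOpen_euclBall _ _).measure_pos volume ⟨0, ?_⟩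
  show ∑ i, ((0 : Fin d → ℝ) i - (0 : Fin d → ℝ) i) ^ 2 < 1 ^ 2
  simp

lemma volume_euclBall_one_lt_top (d : ℕ) : volume (euclBall (0 : Fin d → ℝ) 1) < ⊤ := by
  refine lt_of_le_of_lt (measure_mono ?_) (measure_closedBall_lt_top (x := (0 : Fin d → ℝ))
    (r := 1))
  intro y hy
  simp only [euclBall, Set.mem_setOf_eq, one_pow] at hy
  rw [Metric.mem_closedBall, dist_pi_le_iff (by norm_num)]
  intro i
  rw [Real.dist_eq]
  have h1 : (y i - (0 : Fin d → ℝ) i) ^ 2 ≤ ∑ j, (y j - (0 : Fin d → ℝ) j) ^ 2 :=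
    Finset.single_le_sum (f := fun j => (y j - (0 : Fin d → ℝ) j) ^ 2)
      (fun j _ => sq_nonneg _) (Finset.mem_univ i)
  have h2 : (y i - 0) ^ 2 < 1 ^ 2 := by
    rw [one_pow]
    exact lt_of_le_of_lt h1 hy
  exact (abs_lt_of_sq_lt_sq h2 (by norm_num)).le

lemma volume_parCyl {d : ℕ} (m : ℕ) {r : ℝ} (hr : 0 < r) (t : ℝ) (x : Fin d → ℝ) :
    volume (parCyl m r t x)
      = ENNReal.ofReal (r ^ (2 * m)) *
          (ENNReal.ofReal (r ^ d) * volume (euclBall (0 : Fin d → ℝ) 1)) := by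
  rw [parCyl, Measure.volume_eq_prod, Measure.prod_prod, Real.volume_Ioo, sub_sub_cancel,
    volume_euclBall x hr]

/-! ### The unflattening map -/

lemma tailCoord_unflatten {d : ℕ} (φ : (Fin d → ℝ) → ℝ) (y : Fin (d + 1) → ℝ) :
    tailCoord (unflattenMap φ y) = tailCoord y := by
  funext i
  simp [tailCoord, unflattenMap, Function.update_of_ne (Fin.succ_ne_zero i)]

lemma unflatten_apply_zero {d : ℕ} (φ : (Fin d → ℝ) → ℝ) (y : Fin (d + 1) → ℝ) :
    unflattenMap φ y 0 = y 0 + φ (tailCoord y) := by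
  simp [unflattenMap]

lemma unflatten_apply_succ {d : ℕ} (φ : (Fin d → ℝ) → ℝ) (y : Fin (d + 1) → ℝ) (j : Fin d) :
    unflattenMap φ y j.succ = y j.succ := by
  simp [unflattenMap, Function.update_of_ne (Fin.succ_ne_zero j)]

lemma measurePreserving_unflatten {d : ℕ} {φ : (Fin d → ℝ) → ℝ} (hφc : Continuous φ) :
    MeasurePreserving (unflattenMap φ) (volume : Measure (Fin (d + 1) → ℝ)) volume := by
  set e := MeasurableEquiv.piFinSuccAbove (fun _ : Fin (d + 1) => ℝ) 0 with he
  have hpe : MeasurePreserving e volume volume := volume_preserving_piFinSuccAbove _ 0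
  -- the shear on the product
  have hS' : MeasurePreserving
      (fun p : (Fin d → ℝ) × ℝ => (p.1, p.2 + φ p.1))
      ((volume : Measure (Fin d → ℝ)).prod (volume : Measure ℝ))
      ((volume : Measure (Fin d → ℝ)).prod (volume : Measure ℝ)) := by
    exact MeasurePreserving.skew_product (g := fun a c => c + φ a) (MeasurePreserving.id _)
      (by exact measurable_snd.add (hφc.measurable.comp measurable_fst))
      (Filter.Eventually.of_forall fun y => (measurePreserving_add_right volume (φ y)).map_eq)
  have hS : MeasurePreserving
      (fun p : ℝ × (Fin d → ℝ) => (p.1 + φ p.2, p.2))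
      ((volume : Measure ℝ).prod (volume : Measure (Fin d → ℝ)))
      ((volume : Measure ℝ).prod (volume : Measure (Fin d → ℝ))) := by
    have := (Measure.measurePreserving_swap.comp hS').comp
      (Measure.measurePreserving_swap
        (μ := (volume : Measure ℝ)) (ν := (volume : Measure (Fin d → ℝ))))
    exact this
  have hSvol : MeasurePreserving
      (fun p : ℝ × (Fin d → ℝ) => (p.1 + φ p.2, p.2))
      (volume : Measure (ℝ × (Fin d → ℝ))) volume := by
    rw [Measure.volume_eq_prod]; exact hS
  have hconj : unflattenMap φ
      = (e.symm ∘ (fun p : ℝ × (Fin d → ℝ) => (p.1 + φ p.2, p.2)) ∘ e) := by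
    funext y
    funext i
    have hey : e y = (y 0, fun j => y (Fin.succAbove 0 j)) := rfl
    have htail : (fun j => y (Fin.succAbove 0 j)) = tailCoord y := by
      funext j; rw [Fin.zero_succAbove]; rfl
    simp only [Function.comp_apply, hey, htail]
    have hsymm : ∀ p : ℝ × (Fin d → ℝ), e.symm p = Fin.insertNth 0 p.1 p.2 := fun p => rfl
    rw [hsymm]
    refine Fin.cases ?_ (fun j => ?_) i
    · rw [Fin.insertNth_apply_same, unflatten_apply_zero]
    · rw [unflatten_apply_succ, ← Fin.zero_succAbove j, Fin.insertNth_apply_succAbove,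
        Fin.zero_succAbove]
      rfl
  rw [hconj]
  exact ((hpe.symm e).comp hSvol).comp hpe

lemma unflatten_lipschitz {d : ℕ} {K : ℝ} (hK : 0 < K) {φ : (Fin d → ℝ) → ℝ}
    (hφ : ∀ x y, |φ x - φ y| ≤ K * euclDist x y) (y z : Fin (d + 1) → ℝ) :
    euclDist (unflattenMap φ y) (unflattenMap φ z) ≤ (2 + 2 * K) * euclDist y z := by
  set A := y 0 - z 0 with hA
  set S' := ∑ j : Fin d, (y j.succ - z j.succ) ^ 2 with hS'
  set δ := φ (tailCoord y) - φ (tailCoord z) with hδdef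
  have hS'0 : 0 ≤ S' := Finset.sum_nonneg fun _ _ => sq_nonneg _
  have htail : euclDist (tailCoord y) (tailCoord z) = Real.sqrt S' := by
    simp only [euclDist, tailCoord, hS']
  have hδ : |δ| ≤ K * Real.sqrt S' := by rw [hδdef, ← htail]; exact hφ _ _
  have hδ2 : δ ^ 2 ≤ K ^ 2 * S' := by
    calc δ ^ 2 = |δ| ^ 2 := (sq_abs _).symm
    _ ≤ (K * Real.sqrt S') ^ 2 := pow_le_pow_left₀ (abs_nonneg _) hδ 2
    _ = K ^ 2 * S' := by rw [mul_pow, Real.sq_sqrt hS'0]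
  have hdy : euclDist y z = Real.sqrt (A ^ 2 + S') := by
    simp only [euclDist]
    rw [Fin.sum_univ_succ]
  have hL : euclDist (unflattenMap φ y) (unflattenMap φ z) = Real.sqrt ((A + δ) ^ 2 + S') := by
    simp only [euclDist]
    have hsum : ∀ j : Fin d,
        (unflattenMap φ y j.succ - unflattenMap φ z j.succ) ^ 2 = (y j.succ - z j.succ) ^ 2 :=
      fun j => by rw [unflatten_apply_succ, unflatten_apply_succ]
    rw [Fin.sum_univ_succ, unflatten_apply_zero, unflatten_apply_zero,
      Finset.sum_congr rfl (fun j _ => hsum j), ← hS']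
    congr 2
    rw [hA, hδdef]
    ring
  have hsq : 0 ≤ A ^ 2 + S' := by positivity
  have key : (A + δ) ^ 2 + S' ≤ ((2 + 2 * K) * Real.sqrt (A ^ 2 + S')) ^ 2 := by
    have h2 : ((2 + 2 * K) * Real.sqrt (A ^ 2 + S')) ^ 2 = (2 + 2 * K) ^ 2 * (A ^ 2 + S') := by
      rw [mul_pow, Real.sq_sqrt hsq]
    rw [h2]
    nlinarith [sq_nonneg (A - δ), sq_nonneg A, hδ2, hS'0, hK.le, mul_nonneg hK.le hK.le,
      mul_nonneg (mul_nonneg hK.le hK.le) hS'0, sq_nonneg (A + δ)]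
  calc euclDist (unflattenMap φ y) (unflattenMap φ z)
      = Real.sqrt ((A + δ) ^ 2 + S') := hL
  _ ≤ Real.sqrt (((2 + 2 * K) * Real.sqrt (A ^ 2 + S')) ^ 2) := Real.sqrt_le_sqrt key
  _ = (2 + 2 * K) * Real.sqrt (A ^ 2 + S') := Real.sqrt_sq (by positivity)
  _ = (2 + 2 * K) * euclDist y z := by rw [hdy]

/-! ### Oscillation lemma -/

lemma lintegral_sub_average_le {n : ℕ} {A : Set (ℝ × (Fin n → ℝ))}
    {f : ℝ × (Fin n → ℝ) → ℂ} (hf : Measurable f)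
    (hA0 : volume A ≠ 0) (hAt : volume A ≠ ⊤) (c : ℂ) :
    (∫⁻ z in A, (‖f z - ⨍ w in A, f w‖₊ : ℝ≥0∞))
      ≤ 2 * ∫⁻ z in A, (‖f z - c‖₊ : ℝ≥0∞) := by
  set J := ∫⁻ z in A, (‖f z - c‖₊ : ℝ≥0∞) with hJdef
  rcases eq_or_ne J ⊤ with hJt | hJt
  · rw [hJt, ENNReal.mul_top (by norm_num)]; exact le_top
  set cA := ⨍ w in A, f w with hcAdef
  haveI : IsFiniteMeasure (volume.restrict A) :=
    ⟨by rw [Measure.restrict_apply_univ]; exact hAt.lt_top⟩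
  have hg : Integrable (fun z => f z - c) (volume.restrict A) :=
    ⟨(hf.sub measurable_const).aestronglyMeasurable, hJt.lt_top⟩
  have hfa : Integrable f (volume.restrict A) := by
    have h := hg.add (integrable_const c)
    have h2 : ((fun z => f z - c) + fun _ => c) = f := funext fun z => by
      show f z - c + c = f z
      ring
    rwa [h2] at h
  set τ := (volume A).toReal with hτdef
  have hτ0 : 0 < τ := ENNReal.toReal_pos hA0 hAt
  have havg : (⨍ w in A, (f w - c)) = cA - c := by
    rw [average_eq, integral_sub hfa (integrable_const c), integral_const,
      measureReal_restrict_apply_univ, measureReal_def, smul_sub, smul_smul, ← hτdef,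
      inv_mul_cancel₀ hτ0.ne', one_smul, hcAdef, average_eq, measureReal_restrict_apply_univ, measureReal_def,
      ← hτdef]
  have hJofReal : (∫⁻ z in A, ENNReal.ofReal ‖f z - c‖) = J := by
    rw [hJdef]
    refine lintegral_congr fun z => ?_
    rw [ofReal_norm_eq_enorm, enorm_eq_nnnorm]
  have hnorm : ‖cA - c‖ ≤ τ⁻¹ * J.toReal := by
    rw [← havg, average_eq, measureReal_restrict_apply_univ, measureReal_def, ← hτdef, norm_smul,
      Real.norm_eq_abs, abs_inv, abs_of_nonneg ENNReal.toReal_nonneg]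
    have := norm_integral_le_lintegral_norm (μ := volume.restrict A) (fun w => f w - c)
    rw [hJofReal] at this
    exact mul_le_mul_of_nonneg_left this (by positivity)
  have hkey : (‖cA - c‖₊ : ℝ≥0∞) * volume A ≤ J := by
    calc (‖cA - c‖₊ : ℝ≥0∞) * volume A
        = ENNReal.ofReal ‖cA - c‖ * volume A := by rw [ofReal_norm_eq_enorm, enorm_eq_nnnorm]
    _ ≤ ENNReal.ofReal (τ⁻¹ * J.toReal) * volume A := by
        exact mul_le_mul_left (ENNReal.ofReal_le_ofReal hnorm) _
    _ = (volume A)⁻¹ * J * volume A := by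
        rw [ENNReal.ofReal_mul (by positivity), ENNReal.ofReal_inv_of_pos hτ0, hτdef,
          ENNReal.ofReal_toReal hAt, ENNReal.ofReal_toReal hJt]
    _ = J := by
        rw [mul_comm _ J, mul_assoc, ENNReal.inv_mul_cancel hA0 hAt, mul_one]
  calc (∫⁻ z in A, (‖f z - cA‖₊ : ℝ≥0∞))
      ≤ ∫⁻ z in A, ((‖f z - c‖₊ : ℝ≥0∞) + (‖cA - c‖₊ : ℝ≥0∞)) := by
        refine lintegral_mono fun z => ?_
        have h1 : f z - cA = (f z - c) - (cA - c) := by ring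
        rw [h1]
        exact le_trans (ENNReal.coe_le_coe.2 (nnnorm_sub_le _ _)) (by rw [ENNReal.coe_add])
  _ = J + (‖cA - c‖₊ : ℝ≥0∞) * volume A := by
        rw [lintegral_add_right _ measurable_const, setLIntegral_const, ← hJdef]
  _ ≤ J + J := add_le_add_right hkey _
  _ = 2 * J := (two_mul J).symm

lemma ennreal_mul_div_cancel {a b : ℝ≥0∞} (hb0 : b ≠ 0) (hbt : b ≠ ⊤) : a * b / b = a := by
  rw [mul_div_assoc, ENNReal.div_self hb0 hbt, mul_one]

end SharpFlatten

open SharpFlatten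

/-- **Invariance of the parabolic mean-oscillation seminorm under boundary flattening
(Section 6).** Total space dimension is `d+1 ≥ 2`. -/
theorem sharp_seminorm_flattening_invariance
    (d m : ℕ) (hd : 1 ≤ d) (hm : 1 ≤ m) (K : ℝ) (hK : 0 < K) (T : EReal) (hT : T ≠ ⊥)
    (φ : (Fin d → ℝ) → ℝ) (hφ : ∀ x y, |φ x - φ y| ≤ K * euclDist x y) :
    ∃ C : ℝ, 1 ≤ C ∧
      ∀ a : ℝ × (Fin (d + 1) → ℝ) → ℂ, Measurable a → (∃ M : ℝ, ∀ z, ‖a z‖ ≤ M) →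
        ∀ R : ℝ, 0 < R →
          sharpSemi m T (halfSpace d) (fun z => a (z.1, unflattenMap φ z.2)) R ≤
            ENNReal.ofReal C * sharpSemi m T (graphDomain φ) a (C * R) := by
  classical
  -- the Lipschitz constant of the unflattening map
  set L : ℝ := 2 + 2 * K with hLdef
  have hL1 : 1 ≤ L := by rw [hLdef]; nlinarith
  have hL0 : 0 < L := lt_of_lt_of_le one_pos hL1
  set N : ℕ := 2 * m + (d + 1) with hNdef
  set K₁ : ℝ := L ^ N * 2 ^ (d + 1) with hK1def
  have hLN : L ≤ L ^ N := le_self_pow₀ hL1 (by omega)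
  have h2dpos : (0 : ℝ) < 2 ^ (d + 1) := by positivity
  have h2d1 : (1 : ℝ) ≤ 2 ^ (d + 1) := one_le_pow₀ (by norm_num)
  have hK₁pos : 0 < K₁ := by rw [hK1def]; positivity
  have hLK₁ : L ≤ K₁ := by
    calc L ≤ L ^ N := hLN
    _ ≤ K₁ := le_mul_of_one_le_right (by positivity) h2d1
  have hK₁1 : 1 ≤ K₁ := le_trans hL1 hLK₁
  clear_value L N K₁
  -- continuity of φ
  have hφc : Continuous φ := by
    have h1 : Continuous (fun u : EuclideanSpace ℝ (Fin d) => φ ((WithLp.equiv 2 _) u)) := by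
      refine (LipschitzWith.of_dist_le_mul (K := Real.toNNReal K) ?_).continuous
      intro u v
      rw [Real.coe_toNNReal _ hK.le, Real.dist_eq]
      have := hφ ((WithLp.equiv 2 _) u) ((WithLp.equiv 2 _) v)
      rwa [euclDist_eq_dist, Equiv.symm_apply_apply, Equiv.symm_apply_apply] at this
    have h2 : φ = (fun u : EuclideanSpace ℝ (Fin d) => φ ((WithLp.equiv 2 _) u)) ∘
        (WithLp.equiv 2 (Fin d → ℝ)).symm := by
      funext x; simp
    rw [h2]
    exact h1.comp (PiLp.continuous_toLp 2 _)
  have hΨ : MeasurePreserving (unflattenMap φ) (volume : Measure (Fin (d + 1) → ℝ)) volume :=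
    measurePreserving_unflatten hφc
  set F : ℝ × (Fin (d + 1) → ℝ) → ℝ × (Fin (d + 1) → ℝ) :=
    fun z => (z.1, unflattenMap φ z.2) with hFdef
  have hF : MeasurePreserving F (volume : Measure (ℝ × (Fin (d + 1) → ℝ))) volume := by
    rw [Measure.volume_eq_prod]
    exact (MeasurePreserving.id _).prod hΨ
  have hΩopen : IsOpen (graphDomain φ) := by
    have htc : Continuous (tailCoord (d := d)) :=
      continuous_pi fun i => continuous_apply i.succ
    exact isOpen_lt (hφc.comp htc) (continuous_apply 0)
  set V := volume (euclBall (0 : Fin (d + 1) → ℝ) 1) with hVdef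
  have hV0 : V ≠ 0 := (volume_euclBall_one_pos _).ne'
  have hVt : V ≠ ⊤ := (volume_euclBall_one_lt_top _).ne
  refine ⟨2 * K₁, by linarith, ?_⟩
  intro a ha _ R hR
  refine iSup_le fun t => iSup_le fun ht => iSup_le fun x => iSup_le fun hx =>
    iSup_le fun r => iSup_le fun hr0 => iSup_le fun hrR => ?_
  have hx0 : 0 < x 0 := hx
  set A := parCyl m r t x ∩ (Set.univ ×ˢ halfSpace d) with hAdef
  set x' := unflattenMap φ x with hx'def
  set ρ := L * r with hρdef
  have hρ0 : 0 < ρ := mul_pos hL0 hr0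
  have hrρ : r ≤ ρ := le_mul_of_one_le_left hr0.le hL1
  set B := parCyl m ρ t x' ∩ (Set.univ ×ˢ graphDomain φ) with hBdef
  have hBopen : IsOpen B :=
    ((isOpen_Ioo.prod (isOpen_euclBall _ _)).inter (isOpen_univ.prod hΩopen))
  have hBmeas : MeasurableSet B := hBopen.measurableSet
  -- A maps into B
  have hAB : A ⊆ F ⁻¹' B := by
    rintro ⟨s, y⟩ ⟨⟨hs, hyball⟩, -, hyhalf⟩
    have hy0 : 0 < y 0 := hyhalf
    refine ⟨⟨⟨?_, hs.2⟩, ?_⟩, trivial, ?_⟩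
    · have : r ^ (2 * m) ≤ ρ ^ (2 * m) := pow_le_pow_left₀ hr0.le hrρ _
      have := hs.1
      simp only [Set.mem_Ioo] at *
      linarith
    · rw [mem_euclBall_iff hρ0]
      calc euclDist (unflattenMap φ y) x'
          ≤ L * euclDist y x := by
            rw [hx'def, hLdef]
            exact unflatten_lipschitz hK hφ y x
      _ < L * r := mul_lt_mul_of_pos_left ((mem_euclBall_iff hr0).1 hyball) hL0
    · show φ (tailCoord (unflattenMap φ y)) < unflattenMap φ y 0
      rw [tailCoord_unflatten, unflatten_apply_zero]
      linarith
  -- volume bounds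
  set c' := Function.update x 0 (x 0 + r / 2) with hc'def
  have hc'0 : c' 0 = x 0 + r / 2 := by rw [hc'def, Function.update_self]
  have hc'x : euclDist c' x = r / 2 := by
    simp only [euclDist]
    have hsum : ∑ i, (c' i - x i) ^ 2 = (r / 2) ^ 2 := by
      rw [Finset.sum_eq_single_of_mem 0 (Finset.mem_univ 0)]
      · rw [hc'0]; ring_nf
      · intro b _ hb
        rw [hc'def, Function.update_of_ne hb]
        ring
    rw [hsum, Real.sqrt_sq (by positivity)]
  have hsubA : Set.Ioo (t - r ^ (2 * m)) t ×ˢ euclBall c' (r / 2) ⊆ A := by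
    rintro ⟨s, y⟩ ⟨hs, hy⟩
    have hyd : euclDist y c' < r / 2 := (mem_euclBall_iff (by positivity)).1 hy
    refine ⟨⟨hs, ?_⟩, trivial, ?_⟩
    · rw [mem_euclBall_iff hr0]
      calc euclDist y x ≤ euclDist y c' + euclDist c' x := euclDist_triangle _ _ _
      _ < r / 2 + r / 2 := by rw [hc'x]; linarith
      _ = r := by ring
    · show 0 < y 0
      have h1 : (y 0 - c' 0) ^ 2 ≤ ∑ i, (y i - c' i) ^ 2 :=
        Finset.single_le_sum (f := fun i => (y i - c' i) ^ 2)
          (fun _ _ => sq_nonneg _) (Finset.mem_univ 0)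
      have h2 : (y 0 - c' 0) ^ 2 < (r / 2) ^ 2 := lt_of_le_of_lt h1 hy
      have h3 := abs_lt_of_sq_lt_sq h2 (by positivity)
      have h4 := (abs_lt.1 h3).1
      rw [hc'0] at h4
      linarith
  have hvolA_lb : ENNReal.ofReal (r ^ (2 * m)) * (ENNReal.ofReal ((r / 2) ^ (d + 1)) * V)
      ≤ volume A := by
    have heq : volume (Set.Ioo (t - r ^ (2 * m)) t ×ˢ euclBall c' (r / 2))
        = ENNReal.ofReal (r ^ (2 * m)) * (ENNReal.ofReal ((r / 2) ^ (d + 1)) * V) := by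
      rw [Measure.volume_eq_prod, Measure.prod_prod, Real.volume_Ioo, sub_sub_cancel,
        volume_euclBall c' (by positivity)]
    rw [← heq]
    exact measure_mono hsubA
  have hvolA_ub : volume A ≤ ENNReal.ofReal (r ^ (2 * m)) * (ENNReal.ofReal (r ^ (d + 1)) * V) := by
    rw [← volume_parCyl m hr0 t x]
    exact measure_mono Set.inter_subset_left
  have hA0 : volume A ≠ 0 := by
    refine (lt_of_lt_of_le ?_ hvolA_lb).ne'
    exact ENNReal.mul_pos (ENNReal.ofReal_pos.2 (by positivity)).ne'
      (ENNReal.mul_pos (ENNReal.ofReal_pos.2 (by positivity)).ne' hV0).ne'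
  have hAt : volume A ≠ ⊤ := by
    refine (lt_of_le_of_lt hvolA_ub ?_).ne
    exact ENNReal.mul_lt_top ENNReal.ofReal_lt_top
      (ENNReal.mul_lt_top ENNReal.ofReal_lt_top hVt.lt_top)
  have hvolB_ub : volume B ≤ ENNReal.ofReal (ρ ^ (2 * m)) * (ENNReal.ofReal (ρ ^ (d + 1)) * V) := by
    rw [← volume_parCyl m hρ0 t x']
    exact measure_mono Set.inter_subset_left
  have hB0 : volume B ≠ 0 := by
    have h1 : volume A ≤ volume B := by
      rw [← hF.measure_preimage hBmeas.nullMeasurableSet]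
      exact measure_mono hAB
    intro h
    exact hA0 (le_antisymm (h ▸ h1) zero_le)
  have hBt : volume B ≠ ⊤ := by
    refine (lt_of_le_of_lt hvolB_ub ?_).ne
    exact ENNReal.mul_lt_top ENNReal.ofReal_lt_top
      (ENNReal.mul_lt_top ENNReal.ofReal_lt_top hVt.lt_top)
  have hratio : volume B ≤ ENNReal.ofReal K₁ * volume A := by
    have e : ρ ^ (2 * m) * ρ ^ (d + 1) = K₁ * (r ^ (2 * m) * (r / 2) ^ (d + 1)) := by
      have h1 : ((r : ℝ) / 2) ^ (d + 1) = r ^ (d + 1) / 2 ^ (d + 1) := div_pow r 2 (d + 1)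
      rw [hρdef, hK1def, hNdef, h1, mul_pow, mul_pow, pow_add]
      field_simp
      ring
    have eL : ENNReal.ofReal (ρ ^ (2 * m)) * (ENNReal.ofReal (ρ ^ (d + 1)) * V)
        = ENNReal.ofReal (ρ ^ (2 * m) * ρ ^ (d + 1)) * V := by
      rw [ENNReal.ofReal_mul (by positivity), mul_assoc]
    have eR : ENNReal.ofReal K₁ *
          (ENNReal.ofReal (r ^ (2 * m)) * (ENNReal.ofReal ((r / 2) ^ (d + 1)) * V))
        = ENNReal.ofReal (K₁ * (r ^ (2 * m) * (r / 2) ^ (d + 1))) * V := by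
      rw [ENNReal.ofReal_mul hK₁pos.le, ENNReal.ofReal_mul (by positivity), mul_assoc, mul_assoc]
    calc volume B ≤ ENNReal.ofReal (ρ ^ (2 * m)) * (ENNReal.ofReal (ρ ^ (d + 1)) * V) := hvolB_ub
    _ = ENNReal.ofReal K₁ *
          (ENNReal.ofReal (r ^ (2 * m)) * (ENNReal.ofReal ((r / 2) ^ (d + 1)) * V)) := by
        rw [eL, eR, e]
    _ ≤ ENNReal.ofReal K₁ * volume A := mul_le_mul_right hvolA_lb _
  -- the oscillation estimate
  set cB := ⨍ w in B, a w with hcB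
  have hameas : Measurable (fun z : ℝ × (Fin (d + 1) → ℝ) => a (z.1, unflattenMap φ z.2)) :=
    ha.comp (measurable_fst.prodMk (hΨ.measurable.comp measurable_snd))
  have hosc1 : osc A (fun z => a (z.1, unflattenMap φ z.2))
      ≤ 2 * (∫⁻ z in A, (‖a (z.1, unflattenMap φ z.2) - cB‖₊ : ℝ≥0∞)) / volume A := by
    rw [osc]
    exact ENNReal.div_le_div_right (lintegral_sub_average_le hameas hA0 hAt cB) _
  have hchg : (∫⁻ z in A, (‖a (z.1, unflattenMap φ z.2) - cB‖₊ : ℝ≥0∞))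
      ≤ ∫⁻ w in B, (‖a w - cB‖₊ : ℝ≥0∞) := by
    calc (∫⁻ z in A, (‖a (z.1, unflattenMap φ z.2) - cB‖₊ : ℝ≥0∞))
        ≤ ∫⁻ z in F ⁻¹' B, (‖a (F z) - cB‖₊ : ℝ≥0∞) := lintegral_mono_set hAB
    _ = ∫⁻ w in B, (‖a w - cB‖₊ : ℝ≥0∞) :=
        hF.setLIntegral_comp_preimage hBmeas ((ha.sub measurable_const).nnnorm.coe_nnreal_ennreal)
  have hIB : (∫⁻ w in B, (‖a w - cB‖₊ : ℝ≥0∞)) = osc B a * volume B := by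
    rw [osc, ← hcB, ENNReal.div_mul_cancel hB0 hBt]
  have hmain : osc A (fun z => a (z.1, unflattenMap φ z.2))
      ≤ ENNReal.ofReal (2 * K₁) * osc B a := by
    calc osc A (fun z => a (z.1, unflattenMap φ z.2))
        ≤ 2 * (∫⁻ z in A, (‖a (z.1, unflattenMap φ z.2) - cB‖₊ : ℝ≥0∞)) / volume A := hosc1
    _ ≤ 2 * (osc B a * volume B) / volume A := by
        rw [← hIB]
        exact ENNReal.div_le_div_right (mul_le_mul_right hchg _) _
    _ ≤ 2 * (osc B a * (ENNReal.ofReal K₁ * volume A)) / volume A :=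
        ENNReal.div_le_div_right (mul_le_mul_right (mul_le_mul_right hratio _) _) _
    _ = (2 * ENNReal.ofReal K₁ * osc B a) * volume A / volume A := by
        have h : 2 * (osc B a * (ENNReal.ofReal K₁ * volume A))
            = (2 * ENNReal.ofReal K₁ * osc B a) * volume A := by ring
        rw [h]
    _ = 2 * ENNReal.ofReal K₁ * osc B a := ennreal_mul_div_cancel hA0 hAt
    _ = ENNReal.ofReal (2 * K₁) * osc B a := by
        rw [ENNReal.ofReal_mul (by norm_num), ENNReal.ofReal_ofNat]
  have hΩmem : x' ∈ graphDomain φ := by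
    show φ (tailCoord x') < x' 0
    rw [hx'def, tailCoord_unflatten, unflatten_apply_zero]
    linarith
  have hρle : ρ ≤ 2 * K₁ * R := by
    calc ρ = L * r := hρdef
    _ ≤ (2 * K₁) * R := by
        apply mul_le_mul _ hrR hr0.le (by positivity)
        linarith
  have hle2 : osc B a ≤ sharpSemi m T (graphDomain φ) a (2 * K₁ * R) :=
    le_iSup_of_le t (le_iSup_of_le ht (le_iSup_of_le x' (le_iSup_of_le hΩmem
      (le_iSup_of_le ρ (le_iSup_of_le hρ0 (le_iSup_of_le hρle le_rfl))))))
  exact le_trans hmain (mul_le_mul_right hle2 _)
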